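/- arXiv:2411.19440 — 4 statements merged into one kernel-verified Lean document; each statement's English description precedes it below -/
import Mathlib

section
/- Let X ∈ ℝ^{N×D}, Ã ∈ ℝ^{N×N}, and let G ∈ ℝ^{N×F} be arbitrary (the gradient ∇_{H̃}L). Define G₁ = (Ã X)ᵀ G ∈ ℝ^{D×F} and G₂ = Xᵀ G ∈ ℝ^{D×F}. If X has full row rank (so that (Xᵀ)⁺ G₂ = G exactly) and G has full row rank N, then Ãᵀ = (Xᵀ)⁺ G₁ G⁺, hence Ã is uniquely determined by X, G₁, G₂. -/
open Matrix

private lemma isUnit_of_rank_eq {n : ℕ} (M : Matrix (Fin n) (Fin n) ℝ)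
    (h : M.rank = n) : IsUnit M := by
  have hsurj : Function.Surjective M.mulVecLin := by
    rw [← LinearMap.range_eq_top]
    apply Submodule.eq_top_of_finrank_eq
    simpa [Matrix.rank] using h
  have hbij : Function.Bijective M.mulVecLin :=
    ⟨(LinearMap.injective_iff_surjective).2 hsurj, hsurj⟩
  let e := LinearEquiv.ofBijective M.mulVecLin hbij
  have hcoe : (e : (Fin n → ℝ) →ₗ[ℝ] (Fin n → ℝ)) = M.mulVecLin := rfl
  have hM : M = LinearMap.toMatrix' (e : (Fin n → ℝ) →ₗ[ℝ] (Fin n → ℝ)) := by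
    rw [hcoe, ← Matrix.toLin'_apply'] ; rw [LinearMap.toMatrix'_toLin']
  refine isUnit_iff_exists.2 ⟨LinearMap.toMatrix' (e.symm : (Fin n → ℝ) →ₗ[ℝ] (Fin n → ℝ)), ?_, ?_⟩
  · rw [hM, ← LinearMap.toMatrix'_comp]
    simp
  · rw [hM, ← LinearMap.toMatrix'_comp]
    simp

private lemma key {N D F : ℕ}
    (X : Matrix (Fin N) (Fin D) ℝ) (hX : X.rank = N)
    (G : Matrix (Fin N) (Fin F) ℝ) (hG : G.rank = N)
    (A : Matrix (Fin N) (Fin N) ℝ)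
    (G₁ : Matrix (Fin D) (Fin F) ℝ)
    (hG₁ : G₁ = (A * X)ᵀ * G) :
    Aᵀ = ((X * Xᵀ)⁻¹ * X) * G₁ * (Gᵀ * (G * Gᵀ)⁻¹) := by
  have hXX : IsUnit (X * Xᵀ) := isUnit_of_rank_eq _ (by rw [X.rank_self_mul_transpose, hX])
  have hGG : IsUnit (G * Gᵀ) := isUnit_of_rank_eq _ (by rw [G.rank_self_mul_transpose, hG])
  have h1 : (X * Xᵀ)⁻¹ * (X * Xᵀ) = 1 := nonsing_inv_mul _ ((Matrix.isUnit_iff_isUnit_det _).1 hXX)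
  have h2 : (G * Gᵀ) * (G * Gᵀ)⁻¹ = 1 := mul_nonsing_inv _ ((Matrix.isUnit_iff_isUnit_det _).1 hGG)
  subst hG₁
  have : ((X * Xᵀ)⁻¹ * X) * ((A * X)ᵀ * G) * (Gᵀ * (G * Gᵀ)⁻¹)
      = ((X * Xᵀ)⁻¹ * (X * Xᵀ)) * Aᵀ * ((G * Gᵀ) * (G * Gᵀ)⁻¹) := by
    simp only [transpose_mul, Matrix.mul_assoc]
  rw [this, h1, h2, Matrix.one_mul, Matrix.mul_one]

/-- With X full row rank and G = ∇_{H̃}L full row rank,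
G₁ = (ÃX)ᵀG and G₂ = XᵀG determine Ã uniquely, and
Ãᵀ = (Xᵀ)⁺ G₁ G⁺ where (Xᵀ)⁺ = (XXᵀ)⁻¹X and G⁺ = Gᵀ(GGᵀ)⁻¹. -/
theorem stmt_6 (N D F : ℕ)
    (X : Matrix (Fin N) (Fin D) ℝ) (hX : X.rank = N)
    (G : Matrix (Fin N) (Fin F) ℝ) (hG : G.rank = N)
    (Atil : Matrix (Fin N) (Fin N) ℝ)
    (G₁ G₂ : Matrix (Fin D) (Fin F) ℝ)
    (hG₁ : G₁ = (Atil * X)ᵀ * G) (hG₂ : G₂ = Xᵀ * G) :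
    Atilᵀ = ((X * Xᵀ)⁻¹ * X) * G₁ * (Gᵀ * (G * Gᵀ)⁻¹) ∧
    (∀ A' : Matrix (Fin N) (Fin N) ℝ,
      G₁ = (A' * X)ᵀ * G → G₂ = Xᵀ * G → A' = Atil) := by
  refine ⟨key X hX G hG Atil G₁ hG₁, fun A' h1 _ => ?_⟩
  have := (key X hX G hG A' G₁ h1).trans (key X hX G hG Atil G₁ hG₁).symm
  calc A' = A'ᵀᵀ := (transpose_transpose _).symm
    _ = Atilᵀᵀ := by rw [this]
    _ = Atil := transpose_transpose _
end

section
/- Let h̃ = x W ᵀ + b (single sample, one layer) with loss L = ℓ(h̃). If there exists an index i with ∂L/∂b_i ≠ 0, then the input x is uniquely determined by the layer gradients {∇_W L, ∇_b L}; that is, any two inputs x, x′ producing identical gradients with ∂L/∂b_i ≠ 0 for some common i must be equal. -/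
open Matrix

section LinearLayer

variable {𝕜 E m n : Type*} [NontriviallyNormedField 𝕜] [NormedAddCommGroup E] [NormedSpace 𝕜 E]
  [Fintype n] [DecidableEq m]
  (ℓ : (m → 𝕜) → E) (W : Matrix m n 𝕜) (b : m → 𝕜) (x : n → 𝕜) (i : m) (j : n)

theorem deriv_comp_bias_perturb_eq_lineDeriv :
    deriv (fun t : 𝕜 => ℓ (W *ᵥ x + (b + t • Pi.single i 1))) 0
      = lineDeriv 𝕜 ℓ (W *ᵥ x + b) (Pi.single i 1) := by
  simp only [lineDeriv, add_assoc]

theorem deriv_comp_weight_perturb_eq_lineDeriv [DecidableEq n] :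
    deriv (fun t : 𝕜 => ℓ ((W + t • single i j 1) *ᵥ x + b)) 0
      = lineDeriv 𝕜 ℓ (W *ᵥ x + b) (x j • Pi.single i 1) := by
  have hdir : single i j (1 : 𝕜) *ᵥ x = x j • Pi.single i 1 := by
    ext k
    simp [single_mulVec, Function.update_apply, Pi.single_apply]
  simp only [lineDeriv, add_mulVec, smul_mulVec, hdir, add_right_comm]

theorem deriv_comp_weight_perturb_eq_smul_deriv_comp_bias_perturb [DecidableEq n] :
    deriv (fun t : 𝕜 => ℓ ((W + t • single i j 1) *ᵥ x + b)) 0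
      = x j • deriv (fun t : 𝕜 => ℓ (W *ᵥ x + (b + t • Pi.single i 1))) 0 := by
  rw [deriv_comp_weight_perturb_eq_lineDeriv, deriv_comp_bias_perturb_eq_lineDeriv, lineDeriv_smul]

end LinearLayer

theorem stmt_13_general (D F : ℕ)
    (ℓ : (Fin F → ℝ) → ℝ)
    (W : Matrix (Fin F) (Fin D) ℝ) (b : Fin F → ℝ)
    (gradW : (Fin D → ℝ) → Fin F → Fin D → ℝ) (gradb : (Fin D → ℝ) → Fin F → ℝ)
    (hW : ∀ x i j, gradW x i j =
      deriv (fun t : ℝ => ℓ ((W + t • Matrix.single i j (1:ℝ)).mulVec x + b)) 0)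
    (hb : ∀ x i, gradb x i =
      deriv (fun t : ℝ => ℓ (W.mulVec x + (b + t • (Pi.single i (1:ℝ) : Fin F → ℝ)))) 0)
    (x x' : Fin D → ℝ)
    (heqW : ∀ i j, gradW x i j = gradW x' i j)
    (heqb : ∀ i, gradb x i = gradb x' i)
    (hne : ∃ i, gradb x i ≠ 0) :
    x = x' := by
  have hgrad : ∀ y i j, gradW y i j = y j * gradb y i := fun y i j => by
    rw [hW, hb, deriv_comp_weight_perturb_eq_smul_deriv_comp_bias_perturb, smul_eq_mul]
  obtain ⟨i, hi⟩ := hne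
  funext j
  refine mul_right_cancel₀ hi ?_
  rw [← hgrad, heqW, hgrad, heqb]

/-- For h̃ = x Wᵀ + b with loss L = ℓ(h̃), any two inputs x, x'
producing identical layer gradients, with ∂L/∂b_i ≠ 0 at some common index i,
must be equal. -/
theorem stmt_13 (D F : ℕ)
    (ℓ : (Fin F → ℝ) → ℝ) (hℓ : Differentiable ℝ ℓ)
    (W : Matrix (Fin F) (Fin D) ℝ) (b : Fin F → ℝ)
    (gradW : (Fin D → ℝ) → Fin F → Fin D → ℝ) (gradb : (Fin D → ℝ) → Fin F → ℝ)
    (hW : ∀ x i j, gradW x i j =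
      deriv (fun t : ℝ => ℓ ((W + t • Matrix.single i j (1:ℝ)).mulVec x + b)) 0)
    (hb : ∀ x i, gradb x i =
      deriv (fun t : ℝ => ℓ (W.mulVec x + (b + t • (Pi.single i (1:ℝ) : Fin F → ℝ)))) 0)
    (x x' : Fin D → ℝ)
    (heqW : ∀ i j, gradW x i j = gradW x' i j)
    (heqb : ∀ i, gradb x i = gradb x' i)
    (hne : ∃ i, gradb x i ≠ 0) :
    x = x' :=
  stmt_13_general D F ℓ W b gradW gradb hW hb x x' heqW heqb hne
end

section
/- Let G = ∇_{H̃}L ∈ ℝ^{N×F} with rank N, X ∈ ℝ^{N×D} with rank N (D ≥ N, F ≥ N), and suppose G₁ = (ÃX)ᵀG and G₂ = XᵀG for some Ã ∈ ℝ^{N×N}. Then Ã is the unique matrix satisfying these two equations, and Ã = ( (Xᵀ)⁺ G₁ G⁺ )ᵀ where M⁺ denotes the Moore–Penrose pseudoinverse. -/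
open Matrix

lemma isUnit_of_rank_eq_s15 {N : ℕ} (A : Matrix (Fin N) (Fin N) ℝ) (h : A.rank = N) :
    IsUnit A := by
  rw [← Matrix.mulVec_injective_iff_isUnit]
  have hs : Function.Surjective A.mulVecLin := by
    rw [← LinearMap.range_eq_top]
    apply Submodule.eq_top_of_finrank_eq
    simpa [Matrix.rank] using h
  exact (LinearMap.injective_iff_surjective (f := A.mulVecLin)).mpr hs

/-- With G = ∇_{H̃}L of rank N, X of rank N (D ≥ N, F ≥ N), and
G₁ = (ÃX)ᵀG, G₂ = XᵀG, the matrix Ã is unique and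
Ã = ((Xᵀ)⁺ G₁ G⁺)ᵀ where (Xᵀ)⁺ = (XXᵀ)⁻¹X and G⁺ = Gᵀ(GGᵀ)⁻¹. -/
theorem stmt_15 (N D F : ℕ) (hD : N ≤ D) (hF : N ≤ F)
    (G : Matrix (Fin N) (Fin F) ℝ) (hG : G.rank = N)
    (X : Matrix (Fin N) (Fin D) ℝ) (hX : X.rank = N)
    (Atil : Matrix (Fin N) (Fin N) ℝ)
    (G₁ G₂ : Matrix (Fin D) (Fin F) ℝ)
    (hG₁ : G₁ = (Atil * X)ᵀ * G) (hG₂ : G₂ = Xᵀ * G) :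
    (∀ A' : Matrix (Fin N) (Fin N) ℝ,
      G₁ = (A' * X)ᵀ * G → G₂ = Xᵀ * G → A' = Atil) ∧
    Atil = (((X * Xᵀ)⁻¹ * X) * G₁ * (Gᵀ * (G * Gᵀ)⁻¹))ᵀ := by
  have hXX : IsUnit (X * Xᵀ) := isUnit_of_rank_eq_s15 _ (by rw [rank_self_mul_transpose, hX])
  have hGG : IsUnit (G * Gᵀ) := isUnit_of_rank_eq_s15 _ (by rw [rank_self_mul_transpose, hG])
  have key : ∀ A : Matrix (Fin N) (Fin N) ℝ,
      (((X * Xᵀ)⁻¹ * X) * ((A * X)ᵀ * G) * (Gᵀ * (G * Gᵀ)⁻¹))ᵀ = A := by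
    intro A
    have e : ((X * Xᵀ)⁻¹ * X) * ((A * X)ᵀ * G) * (Gᵀ * (G * Gᵀ)⁻¹)
        = ((X * Xᵀ)⁻¹ * (X * Xᵀ)) * (Aᵀ * ((G * Gᵀ) * (G * Gᵀ)⁻¹)) := by
      rw [transpose_mul]
      simp only [Matrix.mul_assoc]
    rw [e, nonsing_inv_mul _ ((Matrix.isUnit_iff_isUnit_det _).mp hXX),
      mul_nonsing_inv _ ((Matrix.isUnit_iff_isUnit_det _).mp hGG), Matrix.one_mul,
      Matrix.mul_one, transpose_transpose]
  constructor
  · intro A' h1 _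
    have := key A'
    rw [← h1] at this
    rw [← this, hG₁, key Atil]
  · rw [hG₁, key Atil]
end

section
/- Let h̃ = x_agg W₁ᵀ + x W₂ᵀ + b be a GraphSAGE layer and L = ℓ(h̃). If for some index i we have ∂L/∂b_i ≠ 0, then both x and x_agg are uniquely determined by the first-layer gradients (∇_{W₁}L, ∇_{W₂}L, ∇_b L): x = ∇_{(W₂)_i}L/(∂L/∂b_i) and x_agg = ∇_{(W₁)_i}L/(∂L/∂b_i). -/
/-! Perturbing the weight entry `(W)ᵢⱼ` of a linear layer by `t` moves the pre-activation along
the line through it in direction `xⱼ • eᵢ`, while perturbing the bias `bᵢ` moves it in direction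
`eᵢ`. Line derivatives are homogeneous in the direction, so `∂L/∂Wᵢⱼ = xⱼ · ∂L/∂bᵢ`, and dividing
by `∂L/∂bᵢ ≠ 0` recovers the input. In GraphSAGE both weight matrices feed the same
pre-activation, with inputs `x_agg` and `x`. -/

open Matrix

theorem Matrix.add_smul_single_one_mulVec {m n R : Type*} [Fintype n] [DecidableEq m]
    [DecidableEq n] [CommSemiring R] (W : Matrix m n R) (t : R) (i : m) (j : n) (x : n → R) :
    (W + t • single i j 1) *ᵥ x = W *ᵥ x + t • x j • Pi.single i 1 := by
  ext k
  simp [add_mulVec, single_mulVec, Function.update_apply, Pi.single_apply]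

theorem deriv_comp_eq_lineDeriv {𝕜 E F : Type*} [NontriviallyNormedField 𝕜]
    [AddCommGroup E] [Module 𝕜 E] [NormedAddCommGroup F] [NormedSpace 𝕜 F]
    {f : E → F} {g : 𝕜 → E} {p v : E} (hg : ∀ t, g t = p + t • v) :
    deriv (fun t => f (g t)) 0 = lineDeriv 𝕜 f p v := by
  simp only [hg]
  rfl

theorem stmt_18_general (D F : ℕ)
    (ℓ : (Fin F → ℝ) → ℝ)
    (xagg x : Fin D → ℝ) (W₁ W₂ : Matrix (Fin F) (Fin D) ℝ) (b : Fin F → ℝ)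
    (gradW₁ gradW₂ : Fin F → Fin D → ℝ) (gradb : Fin F → ℝ)
    (hW₁ : ∀ i j, gradW₁ i j =
      deriv (fun t : ℝ => ℓ ((W₁ + t • Matrix.single i j (1:ℝ)).mulVec xagg +
        W₂.mulVec x + b)) 0)
    (hW₂ : ∀ i j, gradW₂ i j =
      deriv (fun t : ℝ => ℓ (W₁.mulVec xagg +
        (W₂ + t • Matrix.single i j (1:ℝ)).mulVec x + b)) 0)
    (hb : ∀ i, gradb i =
      deriv (fun t : ℝ => ℓ (W₁.mulVec xagg + W₂.mulVec x + (b + t • (Pi.single i (1:ℝ) : Fin F → ℝ)))) 0)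
    (i : Fin F) (hne : gradb i ≠ 0) :
    (∀ j, x j = gradW₂ i j / gradb i) ∧
    (∀ j, xagg j = gradW₁ i j / gradb i) := by
  set pre := W₁ *ᵥ xagg + W₂ *ᵥ x + b with hpre
  have hb_line : gradb i = lineDeriv ℝ ℓ pre (Pi.single i 1) :=
    (hb i).trans (deriv_comp_eq_lineDeriv fun _ => (add_assoc _ _ _).symm)
  have hW₁_eq_mul (j : Fin D) : gradW₁ i j = xagg j * gradb i := by
    rw [hW₁, deriv_comp_eq_lineDeriv (p := pre) fun t => by
      rw [add_smul_single_one_mulVec, hpre]; abel, lineDeriv_smul, hb_line, smul_eq_mul]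
  have hW₂_eq_mul (j : Fin D) : gradW₂ i j = x j * gradb i := by
    rw [hW₂, deriv_comp_eq_lineDeriv (p := pre) fun t => by
      rw [add_smul_single_one_mulVec, hpre]; abel, lineDeriv_smul, hb_line, smul_eq_mul]
  exact ⟨fun j => eq_div_of_mul_eq hne (hW₂_eq_mul j).symm,
    fun j => eq_div_of_mul_eq hne (hW₁_eq_mul j).symm⟩

/-- GraphSAGE layer h̃ = x_agg W₁ᵀ + x W₂ᵀ + b: if ∂L/∂b_i ≠ 0 for
some i, then both x and x_agg are uniquely determined by the first-layer
gradients: x = ∇_{(W₂)_i}L/(∂L/∂b_i) and x_agg = ∇_{(W₁)_i}L/(∂L/∂b_i). -/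
theorem stmt_18 (D F : ℕ)
    (ℓ : (Fin F → ℝ) → ℝ) (hℓ : Differentiable ℝ ℓ)
    (xagg x : Fin D → ℝ) (W₁ W₂ : Matrix (Fin F) (Fin D) ℝ) (b : Fin F → ℝ)
    (gradW₁ gradW₂ : Fin F → Fin D → ℝ) (gradb : Fin F → ℝ)
    (hW₁ : ∀ i j, gradW₁ i j =
      deriv (fun t : ℝ => ℓ ((W₁ + t • Matrix.single i j (1:ℝ)).mulVec xagg +
        W₂.mulVec x + b)) 0)
    (hW₂ : ∀ i j, gradW₂ i j =
      deriv (fun t : ℝ => ℓ (W₁.mulVec xagg +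
        (W₂ + t • Matrix.single i j (1:ℝ)).mulVec x + b)) 0)
    (hb : ∀ i, gradb i =
      deriv (fun t : ℝ => ℓ (W₁.mulVec xagg + W₂.mulVec x + (b + t • (Pi.single i (1:ℝ) : Fin F → ℝ)))) 0)
    (i : Fin F) (hne : gradb i ≠ 0) :
    (∀ j, x j = gradW₂ i j / gradb i) ∧
    (∀ j, xagg j = gradW₁ i j / gradb i) :=
  stmt_18_general D F ℓ xagg x W₁ W₂ b gradW₁ gradW₂ gradb hW₁ hW₂ hb i hne
end
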